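/- Let G be a group with finite symmetric generating set X. If there is a finite set R of length-reducing rewrite rules over X (each rule u → v with u =_G v and l(v) < l(u)) whose repeated application reduces every word over X to a geodesic word, then there exists k > 0 such that every k-local geodesic over X is geodesic (namely, k can be taken to be the maximal length of a left-hand side of a rule in R). -/

import Mathlib

/-!
A left-hand side `u` of a rule `u → v` is never geodesic, since `v` is a shorter word for the
same element. Hence, once `k` bounds the lengths of all left-hand sides, a `k`-local geodesic
contains no left-hand side as a subword: no rule applies to it, so the reduction to a geodesic
guaranteed by the hypothesis must leave it unchanged.
-/

/-- The minimal length of a word over `X` representing `g` (the geodesic length `l_G`). -/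
noncomputable def lG {G : Type*} [Group G] (X : Set G) (g : G) : ℕ :=
  sInf {n | ∃ w : List G, (∀ x ∈ w, x ∈ X) ∧ w.prod = g ∧ w.length = n}

/-- `w` is a geodesic word over `X`. -/
def Geodesic {G : Type*} [Group G] (X : Set G) (w : List G) : Prop :=
  (∀ x ∈ w, x ∈ X) ∧ w.length = lG X w.prod

/-- `w` is a `k`-local geodesic over `X`: every subword (contiguous factor) of length
at most `k` is geodesic. -/
def LocalGeodesic {G : Type*} [Group G] (X : Set G) (k : ℕ) (w : List G) : Prop :=
  (∀ x ∈ w, x ∈ X) ∧ ∀ u : List G, u <:+: w → u.length ≤ k → Geodesic X u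

/-- A language `L` of words over `X` is `k`-locally excluding: membership (among words
over `X`) is equivalent to avoiding a fixed finite set of forbidden subwords of length
at most `k`. -/
def LocallyExcluding {G : Type*} [Group G] (X : Set G) (k : ℕ) (L : Set (List G)) : Prop :=
  ∃ F : Set (List G), F.Finite ∧ (∀ f ∈ F, f.length ≤ k) ∧
    ∀ w : List G, (∀ x ∈ w, x ∈ X) → (w ∈ L ↔ ∀ f ∈ F, ¬ f <:+: w)

/-- One step of rewriting with the set of rules `R` (replace a subword `p.1` by `p.2`). -/
def Rewrite {G : Type*} (R : Set (List G × List G)) (w w' : List G) : Prop :=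
  ∃ p ∈ R, ∃ l r : List G, w = l ++ p.1 ++ r ∧ w' = l ++ p.2 ++ r

section

variable {G : Type*} [Group G] {X : Set G}

theorem lG_le_length {w : List G} (hw : ∀ x ∈ w, x ∈ X) : lG X w.prod ≤ w.length :=
  Nat.sInf_le ⟨w, hw, rfl, rfl⟩

theorem Geodesic.length_le {u v : List G} (hu : Geodesic X u) (hv : ∀ x ∈ v, x ∈ X)
    (huv : u.prod = v.prod) : u.length ≤ v.length :=
  hu.2 ▸ huv ▸ lG_le_length hv

theorem LocalGeodesic.not_rewrite {k : ℕ} {R : Set (List G × List G)} {w : List G}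
    (hw : LocalGeodesic X k w) (hlhs : ∀ p ∈ R, p.1.length ≤ k)
    (hrule : ∀ p ∈ R,
      (∀ x ∈ p.2, x ∈ X) ∧ p.2.length < p.1.length ∧ p.1.prod = p.2.prod)
    (w' : List G) : ¬ Rewrite R w w' := by
  rintro ⟨p, hp, l, r, rfl, -⟩
  obtain ⟨hrhs, hshorter, hprod⟩ := hrule p hp
  have hgeo : Geodesic X p.1 := hw.2 p.1 ⟨l, r, rfl⟩ (hlhs p hp)
  exact (hgeo.length_le hrhs hprod).not_gt hshorter

end

theorem localGeodesic_geodesic_of_rewrite_general {G : Type*} [Group G] (X : Set G)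
    (R : Finset (List G × List G))
    (hR : ∀ p ∈ R, (∀ x ∈ p.1, x ∈ X) ∧ (∀ x ∈ p.2, x ∈ X) ∧
      p.2.length < p.1.length ∧ p.1.prod = p.2.prod)
    (hred : ∀ w : List G, (∀ x ∈ w, x ∈ X) →
      ∃ w' : List G, Relation.ReflTransGen (Rewrite (R : Set (List G × List G))) w w' ∧
        Geodesic X w') :
    ∃ k : ℕ, 0 < k ∧ ∀ w : List G, LocalGeodesic X k w → Geodesic X w := by
  refine ⟨R.sup (fun p => p.1.length) + 1, Nat.succ_pos _, fun w hw => ?_⟩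
  have hlhs (p) (hp : p ∈ R) : p.1.length ≤ R.sup (fun p => p.1.length) + 1 :=
    (Finset.le_sup (f := fun p => p.1.length) hp).trans (Nat.le_succ _)
  have hirred := hw.not_rewrite hlhs fun p hp => (hR p hp).2
  obtain ⟨w', hreduce, hgeo⟩ := hred w hw.1
  rwa [(Relation.reflTransGen_iff_eq hirred).1 hreduce] at hgeo

/-- (ii) implies (iii) in the main theorem: if a finite set of length-reducing rewrite
rules over `X` reduces every word over `X` to a geodesic, then there is `k > 0` such
that every `k`-local geodesic over `X` is geodesic. -/
theorem localGeodesic_geodesic_of_rewrite {G : Type*} [Group G] (X : Set G)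
    (hfin : X.Finite) (hsym : ∀ x ∈ X, x⁻¹ ∈ X) (hgen : Subgroup.closure X = ⊤)
    (R : Finset (List G × List G))
    (hR : ∀ p ∈ R, (∀ x ∈ p.1, x ∈ X) ∧ (∀ x ∈ p.2, x ∈ X) ∧
      p.2.length < p.1.length ∧ p.1.prod = p.2.prod)
    (hred : ∀ w : List G, (∀ x ∈ w, x ∈ X) →
      ∃ w' : List G, Relation.ReflTransGen (Rewrite (R : Set (List G × List G))) w w' ∧
        Geodesic X w') :
    ∃ k : ℕ, 0 < k ∧ ∀ w : List G, LocalGeodesic X k w → Geodesic X w :=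
  localGeodesic_geodesic_of_rewrite_general X R hR hred
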